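/- arXiv:1111.0241 — 3 statements merged into one kernel-verified Lean document; each statement's English description precedes it below -/
import Mathlib

section
/- Let ω : ℝ → ℝ be a quasiperiodic function, and suppose the sequence (ω(n))_{n ∈ ℕ} converges to a finite limit as n → ∞. Then ω is constant on the positive integers, i.e., ω(n) = ω(m) for all positive integers n and m. -/
/-!
Each periodic summand factors through a circle, so `ω = G ∘ Φ` with `G` continuous on the compact
torus `T = ∏ ℝ ⧸ p_i ℤ` and `Φ : ℝ → T` the additive projection. In a sequentially compact group
the multiples `d • x` come back arbitrarily close to `0` for arbitrarily large `d ∈ ℕ`: take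
differences along a convergent subsequence of `n • x`. Hence `ω (n + d) = G (Φ n + d • Φ 1)`
returns arbitrarily close to `ω n` along `d → ∞`, while it also tends to `L`; so `ω n = L`.
-/

/-- A function `ℝ → ℝ` is quasiperiodic if it is a sum of finitely many
continuous periodic functions. -/
def Quasiperiodic (ω : ℝ → ℝ) : Prop :=
  ∃ (k : ℕ) (f : Fin k → ℝ → ℝ) (p : Fin k → ℝ),
    (∀ i, Continuous (f i)) ∧ (∀ i, 0 < p i ∧ Function.Periodic (f i) (p i)) ∧
    ω = fun t => ∑ i, f i t

open Filter Topology

theorem Function.Periodic.continuous_lift {α β : Type*} [AddGroup α] [TopologicalSpace α]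
    [TopologicalSpace β] {f : α → β} {c : α} (hf : Function.Periodic f c) (hc : Continuous f) :
    Continuous hf.lift :=
  (QuotientAddGroup.isQuotientMap_mk _).continuous_iff.mpr hc

theorem Quasiperiodic.exists_eq_comp_torus {ω : ℝ → ℝ} (hω : Quasiperiodic ω) :
    ∃ (k : ℕ) (p : Fin k → ℝ), (∀ i, 0 < p i) ∧
      ∃ G : (∀ i, AddCircle (p i)) → ℝ, Continuous G ∧ ∀ t, ω t = G fun _ => t := by
  obtain ⟨k, f, p, hcont, hper, rfl⟩ := hω
  refine ⟨k, p, fun i => (hper i).1, fun x => ∑ i, (hper i).2.lift (x i), ?_, fun _ => rfl⟩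
  exact continuous_finsetSum _ fun i _ =>
    ((hper i).2.continuous_lift (hcont i)).comp (continuous_apply i)

theorem exists_tendsto_atTop_nsmul_tendsto_zero {K : Type*} [AddGroup K] [TopologicalSpace K]
    [IsTopologicalAddGroup K] [SeqCompactSpace K] (x : K) :
    ∃ d : ℕ → ℕ, Tendsto d atTop atTop ∧ Tendsto (fun N => d N • x) atTop (𝓝 0) := by
  obtain ⟨y, φ, hφ, hlim⟩ := SeqCompactSpace.tendsto_subseq fun n : ℕ => n • x
  have hgap : ∀ N, N + φ N ≤ φ (N + N) := fun N => hφ.add_le_nat N N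
  refine ⟨fun N => φ (N + N) - φ N, ?_, ?_⟩
  · exact tendsto_atTop_mono (fun N => show N ≤ _ by have := hgap N; omega) tendsto_id
  · have hdouble : Tendsto (fun N : ℕ => N + N) atTop atTop :=
      tendsto_atTop_mono (fun N => Nat.le_add_left N N) tendsto_id
    have hlim' : Tendsto (fun N => φ (N + N) • x) atTop (𝓝 y) := hlim.comp hdouble
    simpa only [sub_nsmul x (hφ.monotone (Nat.le_add_left _ _)), sub_self, sub_eq_add_neg,
      Function.comp_apply] using hlim'.sub hlim

theorem eq_of_tendsto_comp_add_nsmul {K X : Type*} [AddGroup K] [TopologicalSpace K]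
    [IsTopologicalAddGroup K] [SeqCompactSpace K] [TopologicalSpace X] [T2Space X]
    {G : K → X} (hG : Continuous G) (x y : K) {L : X}
    (h : Tendsto (fun d : ℕ => G (y + d • x)) atTop (𝓝 L)) : G y = L := by
  obtain ⟨d, hd, hd0⟩ := exists_tendsto_atTop_nsmul_tendsto_zero x
  have hy : Tendsto (fun N => y + d N • x) atTop (𝓝 y) := by
    simpa using tendsto_const_nhds.add hd0
  exact tendsto_nhds_unique ((hG.tendsto y).comp hy) (h.comp hd)

theorem stmt9 (ω : ℝ → ℝ) (hω : Quasiperiodic ω) (L : ℝ)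
    (hlim : Filter.Tendsto (fun n : ℕ => ω n) Filter.atTop (nhds L)) :
    ∀ n m : ℕ, 1 ≤ n → 1 ≤ m → ω n = ω m := by
  obtain ⟨k, p, hp, G, hG, hωG⟩ := hω.exists_eq_comp_torus
  have : ∀ i, Fact (0 < p i) := fun i => ⟨hp i⟩
  have hconst : ∀ n : ℕ, ω n = L := fun n => by
    rw [hωG]
    refine eq_of_tendsto_comp_add_nsmul hG (fun i => ((1 : ℝ) : AddCircle (p i))) _ ?_
    refine (hlim.comp (tendsto_add_atTop_nat n)).congr fun d => ?_
    simp only [Function.comp_apply, hωG]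
    congr 1
    ext i
    simp [← AddCircle.coe_nsmul, add_comm]
  intro n m _ _
  rw [hconst n, hconst m]
end

section
/- Let k ≥ 0 be an integer, U ⊆ ℂ an open set, and f holomorphic on U. Then there exist continuous functions φ₀, φ₁, …, φ_k : U → ℂ, not depending on m, such that for every integer m and every z ∈ U with f(z) ≠ 0, (H_k^m f)(z) = f(z)^{m−k} · ∑_{j=0}^{k} φ_j(z)·mʲ (where f(z)^{m−k} denotes the integer power, possibly negative). -/
/-!
Writing `H_k^m f = f^(m-k) · P_k(m)` with `P_k` a polynomial in `m` of degree at most `k`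
whose coefficients are holomorphic functions of `z`, the product rule gives
`z · (f^(m-k) P_k(m))' = f^(m-k-1) · (z f' (m - k) P_k(m) + z f P_k'(m))`,
which is again of this form with `k + 1` in place of `k`. The coefficients are thus given by an
explicit recursion, and stay holomorphic because derivatives of holomorphic functions are.
-/

open Finset Topology

/-- `Hop k g` is the result of applying the operator `g ↦ (z ↦ z·g′(z))` `k` times to `g`. -/
noncomputable def Hop (k : ℕ) (g : ℂ → ℂ) : ℂ → ℂ :=
  (fun h : ℂ → ℂ => fun z => z * deriv h z)^[k] g

lemma Hop_succ_apply (k : ℕ) (g : ℂ → ℂ) (z : ℂ) :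
    Hop (k + 1) g z = z * deriv (Hop k g) z := by
  simp only [Hop, Function.iterate_succ_apply']

def shiftCoeff {α : Type*} [Zero α] (a : ℕ → α) : ℕ → α
  | 0 => 0
  | n + 1 => a n

lemma sum_range_succ_shiftCoeff_mul_pow {R : Type*} [CommSemiring R] (a : ℕ → R) (x : R)
    (N : ℕ) :
    ∑ n ∈ range (N + 1), shiftCoeff a n * x ^ n = x * ∑ n ∈ range N, a n * x ^ n := by
  rw [sum_range_succ', mul_sum]
  simp only [shiftCoeff, zero_mul, add_zero, pow_succ]
  exact sum_congr rfl fun n _ => by ring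

/-- `hopCoeff f k j` is the coefficient `φ_j` of `m ^ j` in `H_k^m f = f^(m-k) ∑ φ_j m^j`. -/
noncomputable def hopCoeff (f : ℂ → ℂ) : ℕ → ℕ → ℂ → ℂ
  | 0 => fun j _ => if j = 0 then 1 else 0
  | k + 1 => fun j z =>
      z * deriv f z * (shiftCoeff (hopCoeff f k · z) j - k * hopCoeff f k j z)
        + z * f z * deriv (hopCoeff f k j) z

lemma hopCoeff_eq_zero_of_lt (f : ℂ → ℂ) {k j : ℕ} (h : k < j) : hopCoeff f k j = 0 := by
  induction k generalizing j with
  | zero => funext z; simp [hopCoeff, h.ne']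
  | succ k ih =>
    obtain ⟨i, rfl⟩ : ∃ i, j = i + 1 := ⟨j - 1, by omega⟩
    funext z
    simp [hopCoeff, shiftCoeff, ih (by omega : k < i), ih (by omega : k < i + 1)]

lemma differentiableOn_hopCoeff {U : Set ℂ} (hU : IsOpen U) {f : ℂ → ℂ}
    (hf : DifferentiableOn ℂ f U) (k j : ℕ) : DifferentiableOn ℂ (hopCoeff f k j) U := by
  induction k generalizing j with
  | zero => exact differentiableOn_const _
  | succ k ih =>
    have hshift : DifferentiableOn ℂ (fun z => shiftCoeff (hopCoeff f k · z) j) U := by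
      cases j with
      | zero => exact differentiableOn_const 0
      | succ j => exact ih j
    have hf' := hf.deriv hU
    have hφ' := (ih j).deriv hU
    have hφ := ih j
    simp only [hopCoeff]
    fun_prop

lemma sum_range_hopCoeff_succ (f : ℂ → ℂ) (k : ℕ) (z x : ℂ) :
    ∑ j ∈ range (k + 2), hopCoeff f (k + 1) j z * x ^ j
      = z * deriv f z * (x - k) * ∑ j ∈ range (k + 1), hopCoeff f k j z * x ^ j
        + z * f z * ∑ j ∈ range (k + 1), deriv (hopCoeff f k j) z * x ^ j := by
  have htop : hopCoeff f k (k + 1) = 0 := hopCoeff_eq_zero_of_lt f k.lt_succ_self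
  have hterm : ∀ j, hopCoeff f (k + 1) j z * x ^ j
      = z * deriv f z * (shiftCoeff (hopCoeff f k · z) j * x ^ j)
        - k * (z * deriv f z) * (hopCoeff f k j z * x ^ j)
        + z * f z * (deriv (hopCoeff f k j) z * x ^ j) := fun j => by
    simp only [hopCoeff]; ring
  simp only [hterm, sum_add_distrib, sum_sub_distrib, ← mul_sum,
    sum_range_succ_shiftCoeff_mul_pow]
  rw [sum_range_succ _ (k + 1), sum_range_succ _ (k + 1), htop]
  simp only [Pi.zero_apply, deriv_zero, zero_mul, add_zero]
  ring

theorem Hop_zpow_eq {U : Set ℂ} (hU : IsOpen U) {f : ℂ → ℂ} (hf : DifferentiableOn ℂ f U)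
    (k : ℕ) (m : ℤ) {z : ℂ} (hz : z ∈ U) (hfz : f z ≠ 0) :
    Hop k (fun w => f w ^ m) z
      = f z ^ (m - k) * ∑ j ∈ range (k + 1), hopCoeff f k j z * (m : ℂ) ^ j := by
  induction k generalizing z with
  | zero => simp [Hop, hopCoeff]
  | succ k ih =>
    have hUz : U ∈ 𝓝 z := hU.mem_nhds hz
    have hHop : Hop k (fun w => f w ^ m) =ᶠ[𝓝 z]
        fun w => f w ^ (m - k) * ∑ j ∈ range (k + 1), hopCoeff f k j w * (m : ℂ) ^ j := by
      filter_upwards [hUz, (hf.continuousOn.continuousAt hUz).eventually_ne hfz] with w hw hfw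
      exact ih hw hfw
    have hderiv : HasDerivAt
        (fun w => f w ^ (m - k) * ∑ j ∈ range (k + 1), hopCoeff f k j w * (m : ℂ) ^ j)
        (((m - k : ℤ) : ℂ) * f z ^ (m - k - 1) * deriv f z
            * ∑ j ∈ range (k + 1), hopCoeff f k j z * (m : ℂ) ^ j
          + f z ^ (m - k) * ∑ j ∈ range (k + 1), deriv (hopCoeff f k j) z * (m : ℂ) ^ j) z :=
      ((hasDerivAt_zpow (m - k) (f z) (Or.inl hfz)).comp z
        (hf.differentiableAt hUz).hasDerivAt).mul (HasDerivAt.fun_sum fun j _ =>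
          (((differentiableOn_hopCoeff hU hf k j).differentiableAt hUz).hasDerivAt).mul_const
            ((m : ℂ) ^ j))
    have hpow : f z ^ (m - k) = f z ^ (m - (k + 1 : ℕ)) * f z := by
      rw [← zpow_add_one₀ hfz]; push_cast; ring_nf
    rw [Hop_succ_apply, hHop.deriv_eq, hderiv.deriv, sum_range_hopCoeff_succ, hpow,
      show m - k - 1 = m - (k + 1 : ℕ) by push_cast; ring]
    push_cast
    ring

theorem stmt13 (k : ℕ) (U : Set ℂ) (hU : IsOpen U) (f : ℂ → ℂ)
    (hf : DifferentiableOn ℂ f U) :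
    ∃ φ : Fin (k + 1) → ℂ → ℂ, (∀ j, ContinuousOn (φ j) U) ∧
      ∀ m : ℤ, ∀ z ∈ U, f z ≠ 0 →
        Hop k (fun w => f w ^ m) z
          = f z ^ (m - k) * ∑ j : Fin (k + 1), φ j z * (m : ℂ) ^ (j : ℕ) := by
  refine ⟨fun j => hopCoeff f k j, fun j => (differentiableOn_hopCoeff hU hf k j).continuousOn,
    fun m z hz hfz => ?_⟩
  rw [Hop_zpow_eq hU hf k m hz hfz,
    Fin.sum_univ_eq_sum_range (fun j => hopCoeff f k j z * (m : ℂ) ^ j)]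
end

section
/- Let P(x,y) ∈ ℂ[x,y] be irreducible with deg_x P > 0 and deg_y P > 0, with every coefficient of P algebraic over ℚ, and suppose there is no constant c ∈ ℂ with P⋆ = c·P. Then for every (α,β) ∈ ℂ² with |α| = 1, |β| = 1, and P(α,β) = 0, both α and β are algebraic over ℚ. -/
/-!
On the torus `|x| = |y| = 1` we have `1 / conj x = x`, so the reciprocal `P⋆` vanishes at every zero
`(α, β)` of `P` there. Since `deg_x P⋆ ≤ deg_x P` and `deg_y P⋆ ≤ deg_y P`, the irreducible `P` can
divide `P⋆` only if `P⋆` is a constant multiple of `P`; so `P ∤ P⋆`. Both polynomials have their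
coefficients in the field `K` of algebraic numbers, and over `K[y]` Gauss's lemma makes `P` and
`P⋆` coprime in `K(y)[x]`, so their resultant in `x` is a nonzero `r ∈ K[y]` with `r(β) = 0`.
Thus `β` is algebraic, and exchanging the variables gives the same for `α`.
-/

namespace Polynomial

theorem exists_ne_zero_mul_add_mul_eq_C {R : Type*} [CommRing R] [IsDomain R]
    [IsGCDMonoid R] {p q : R[X]} (hp : Irreducible p) (hdeg : p.natDegree ≠ 0) (hpq : ¬p ∣ q) :
    ∃ r ≠ 0, ∃ a b, p * a + q * b = C r := by
  -- Gauss's lemma carries irreducibility and `¬p ∣ q` to the fraction field, where they give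
  -- coprimality and hence a nonzero resultant.
  let F := FractionRing R
  have hinj : Function.Injective (algebraMap R F) := IsFractionRing.injective R F
  have hprim := hp.isPrimitive hdeg
  have hcop : IsCoprime (p.map (algebraMap R F)) (q.map (algebraMap R F)) :=
    (hprim.irreducible_iff_irreducible_map_fraction_map.mp hp).coprime_iff_not_dvd.mpr
      (mt (hprim.dvd_iff_fraction_map_dvd_fraction_map F).mpr hpq)
  obtain ⟨a, b, -, -, hab⟩ := exists_mul_add_mul_eq_C_resultant p q le_rfl le_rfl (.inl hdeg)
  refine ⟨resultant p q, fun h => resultant_ne_zero _ _ hcop ?_, a, b, hab⟩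
  rw [natDegree_map_eq_of_injective hinj, natDegree_map_eq_of_injective hinj, resultant_map_map,
    h, map_zero]

theorem not_injective_of_eval₂_eq_zero {R L : Type*} [CommRing R] [IsDomain R]
    [IsGCDMonoid R] [CommRing L] (φ : R →+* L) {p q : R[X]} (hp : Irreducible p)
    (hdeg : p.natDegree ≠ 0) (hpq : ¬p ∣ q) {y : L} (hpy : p.eval₂ φ y = 0)
    (hqy : q.eval₂ φ y = 0) : ¬Function.Injective φ := by
  obtain ⟨r, hr, a, b, hab⟩ := exists_ne_zero_mul_add_mul_eq_C hp hdeg hpq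
  refine fun hφ => hr (hφ ?_)
  rw [map_zero, ← eval₂_C φ y, ← hab, eval₂_add, eval₂_mul, eval₂_mul, hpy, hqy]
  ring

end Polynomial

namespace MvPolynomial

section Reciprocal

variable {σ R : Type*} [DecidableEq σ] [CommSemiring R] [StarRing R]

/-- The reciprocal `P⋆ = x ^ deg P * conj (P (1 / conj x))`, written monomial by monomial. -/
noncomputable def reciprocal (P : MvPolynomial σ R) : MvPolynomial σ R :=
  ∑ m ∈ P.support, monomial (P.degrees.toFinsupp - m) (star (P.coeff m))

theorem coeff_reciprocal_mem {S : Type*} [SetLike S R] [AddSubmonoidClass S R] {s : S}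
    (hs : ∀ z ∈ s, star z ∈ s) {P : MvPolynomial σ R} (hP : ∀ m, P.coeff m ∈ s) (m : σ →₀ ℕ) :
    (reciprocal P).coeff m ∈ s := by
  rw [reciprocal, coeff_sum]
  refine sum_mem fun n _ => ?_
  rw [coeff_monomial]
  split_ifs
  exacts [hs _ (hP n), zero_mem s]

theorem degreeOf_reciprocal_le (P : MvPolynomial σ R) (i : σ) :
    (reciprocal P).degreeOf i ≤ P.degreeOf i := by
  refine (degreeOf_sum_le i _ _).trans (Finset.sup_le fun m _ => degreeOf_le_iff.mpr ?_)
  intro n hn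
  rw [Finset.mem_singleton.mp (support_monomial_subset hn), Finsupp.tsub_apply,
    Multiset.toFinsupp_apply, ← degreeOf_def]
  exact Nat.sub_le _ _

end Reciprocal

theorem eval_reciprocal {σ 𝕜 : Type*} [Fintype σ] [DecidableEq σ] [Field 𝕜] [StarRing 𝕜]
    (P : MvPolynomial σ 𝕜) {x : σ → 𝕜} (hx : ∀ i, x i ≠ 0) :
    eval x (reciprocal P) =
      (∏ i, x i ^ P.degreeOf i) * starRingEnd 𝕜 (eval (fun i => 1 / starRingEnd 𝕜 (x i)) P) := by
  rw [reciprocal, map_sum, eval_eq', map_sum, Finset.mul_sum]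
  refine Finset.sum_congr rfl fun m hm => ?_
  rw [eval_monomial, Finsupp.prod_fintype _ _ fun i => pow_zero _]
  simp only [map_mul, map_prod, map_pow, map_div₀, map_one, star_star, starRingEnd_apply,
    Finsupp.tsub_apply, Multiset.toFinsupp_apply, ← degreeOf_def]
  rw [mul_left_comm, ← Finset.prod_mul_distrib]
  congr 1
  refine Finset.prod_congr rfl fun i _ => ?_
  rw [pow_sub₀ _ (hx i) (monomial_le_degreeOf i hm), one_div, inv_pow]

theorem eval_reciprocal_eq_zero {σ 𝕜 : Type*} [Fintype σ] [DecidableEq σ] [RCLike 𝕜]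
    (P : MvPolynomial σ 𝕜) {x : σ → 𝕜} (hx : ∀ i, ‖x i‖ = 1) (hP : eval x P = 0) :
    eval x (reciprocal P) = 0 := by
  have hx₀ (i : σ) : x i ≠ 0 := norm_ne_zero_iff.mp (by rw [hx i]; exact one_ne_zero)
  have hinv : (fun i => 1 / starRingEnd 𝕜 (x i)) = x := by
    ext i
    rw [← RCLike.inv_eq_conj (hx i), one_div, inv_inv]
  rw [eval_reciprocal P hx₀, hinv, hP, map_zero, mul_zero]

theorem exists_eq_C_mul_of_dvd {σ R : Type*} [CommSemiring R] [NoZeroDivisors R]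
    {P Q : MvPolynomial σ R} (hP : P ≠ 0) (hdvd : P ∣ Q)
    (hdeg : ∀ i, Q.degreeOf i ≤ P.degreeOf i) : ∃ c, Q = C c * P := by
  obtain ⟨t, rfl⟩ := hdvd
  rcases eq_or_ne t 0 with rfl | ht
  · exact ⟨0, by simp⟩
  have hvars : t.vars = ∅ := Finset.eq_empty_of_forall_notMem fun i hi => by
    have := hdeg i
    rw [degreeOf_mul_eq hP ht] at this
    exact mem_vars_iff_degreeOf_ne_zero.mp hi (by omega)
  exact ⟨t.coeff 0, by rw [mul_comm, ← vars_eq_empty_iff_eq_C.mp hvars]⟩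

instance isLocalHom_map {σ K S : Type*} [Field K] [CommRing S] [IsDomain S] (f : K →+* S) :
    IsLocalHom (map f : MvPolynomial σ K →+* MvPolynomial σ S) := by
  refine ⟨fun a ha => ?_⟩
  obtain ⟨r, hr, hra⟩ := isUnit_iff_eq_C_of_isReduced.mp ha
  have hr' : f (a.coeff 0) = r := by rw [← coeff_map, hra, coeff_zero_C]
  have ha' : a = C (a.coeff 0) := map_injective f f.injective (by rw [hra, map_C, hr'])
  rw [ha']
  exact (isUnit_iff_ne_zero.mpr fun h => hr.ne_zero (by rw [← hr', h, map_zero])).map C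

variable {K L : Type*} [Field K] [CommRing L] [Algebra K L]

theorem isAlgebraic_one_of_aeval_eq_zero {p q : MvPolynomial (Fin 2) K} (hp : Irreducible p)
    (hdeg : p.degreeOf 0 ≠ 0) (hpq : ¬p ∣ q) {x : Fin 2 → L} (hpx : aeval x p = 0)
    (hqx : aeval x q = 0) : IsAlgebraic K (x 1) := by
  let e := finSuccEquiv K 1
  let φ : MvPolynomial (Fin 1) K →+* L := (aeval (Fin.tail x)).toRingHom
  have heval (f : MvPolynomial (Fin 2) K) : (e f).eval₂ φ (x 0) = aeval x f := by
    suffices (Polynomial.eval₂RingHom φ (x 0)).comp (e : _ →+* _) = (aeval x).toRingHom from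
      DFunLike.congr_fun this f
    refine ringHom_ext (fun c => by simp [e, φ, finSuccEquiv_apply]) fun i => ?_
    refine Fin.cases ?_ (fun j => ?_) i
    · simp [e, finSuccEquiv_X_zero]
    · simp [e, φ, finSuccEquiv_X_succ, Fin.tail]
  have hnot := Polynomial.not_injective_of_eval₂_eq_zero φ (hp.map e)
    (by rwa [natDegree_finSuccEquiv]) (by rwa [map_dvd_iff e]) (by rw [heval, hpx])
    (by rw [heval, hqx])
  by_contra h
  exact hnot (algebraicIndependent_iff_injective_aeval.mp
    (algebraicIndependent_unique_type_iff.mpr h))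

theorem isAlgebraic_of_aeval_eq_zero {p q : MvPolynomial (Fin 2) K} (hp : Irreducible p)
    (hdeg₀ : p.degreeOf 0 ≠ 0) (hdeg₁ : p.degreeOf 1 ≠ 0) (hpq : ¬p ∣ q) {x : Fin 2 → L}
    (hpx : aeval x p = 0) (hqx : aeval x q = 0) : IsAlgebraic K (x 0) ∧ IsAlgebraic K (x 1) := by
  refine ⟨?_, isAlgebraic_one_of_aeval_eq_zero hp hdeg₀ hpq hpx hqx⟩
  let e := renameEquiv K (Equiv.swap (0 : Fin 2) 1)
  have heval (f : MvPolynomial (Fin 2) K) : aeval (x ∘ Equiv.swap 0 1) (e f) = aeval x f := by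
    rw [renameEquiv_apply, aeval_rename]
    congr 1
    ext i
    simp
  have hdeg : (e p).degreeOf 0 = p.degreeOf 1 := by
    simpa [e] using degreeOf_rename_of_injective (p := p) (Equiv.swap (0 : Fin 2) 1).injective 1
  exact isAlgebraic_one_of_aeval_eq_zero (hp.map e) (hdeg ▸ hdeg₁) (by rwa [map_dvd_iff e])
    (by rw [heval, hpx]) (by rw [heval, hqx])

theorem isAlgebraic_of_eval_eq_zero {K L : Type*} [Field K] [CommRing L] [IsDomain L]
    [Algebra K L] {p q : MvPolynomial (Fin 2) L} (hpK : p ∈ Set.range (map (algebraMap K L)))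
    (hqK : q ∈ Set.range (map (algebraMap K L))) (hp : Irreducible p)
    (hdeg₀ : p.degreeOf 0 ≠ 0) (hdeg₁ : p.degreeOf 1 ≠ 0) (hpq : ¬p ∣ q) {x : Fin 2 → L}
    (hpx : eval x p = 0) (hqx : eval x q = 0) : IsAlgebraic K (x 0) ∧ IsAlgebraic K (x 1) := by
  obtain ⟨p, rfl⟩ := hpK
  obtain ⟨q, rfl⟩ := hqK
  have hvars : p.vars = (map (algebraMap K L) p).vars :=
    (vars_map_of_injective p (algebraMap K L).injective).symm
  rw [eval_map, ← aeval_def] at hpx hqx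
  refine isAlgebraic_of_aeval_eq_zero hp.of_map ?_ ?_ (fun h => hpq (map_dvd _ h)) hpx hqx <;>
    rwa [← mem_vars_iff_degreeOf_ne_zero, hvars, mem_vars_iff_degreeOf_ne_zero]

end MvPolynomial

open MvPolynomial in
theorem stmt17 (P : MvPolynomial (Fin 2) ℂ) (hirr : Irreducible P)
    (hdx : 0 < P.degreeOf 0) (hdy : 0 < P.degreeOf 1)
    (halg : ∀ m : Fin 2 →₀ ℕ, IsAlgebraic ℚ (MvPolynomial.coeff m P))
    -- there is no constant `c` with `P⋆ = c·P`
    (hnrec : ¬∃ c : ℂ, ∀ x y : ℂ, x ≠ 0 → y ≠ 0 →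
      x ^ P.degreeOf 0 * y ^ P.degreeOf 1 *
        (starRingEnd ℂ)
          (MvPolynomial.eval ![1 / (starRingEnd ℂ) x, 1 / (starRingEnd ℂ) y] P)
        = c * MvPolynomial.eval ![x, y] P) :
    ∀ α β : ℂ, ‖α‖ = 1 → ‖β‖ = 1 →
      MvPolynomial.eval ![α, β] P = 0 → IsAlgebraic ℚ α ∧ IsAlgebraic ℚ β := by
  intro α β hα hβ hPz
  have hK (f : MvPolynomial (Fin 2) ℂ) (hf : ∀ m, f.coeff m ∈ algebraicClosure ℚ ℂ) :
      f ∈ Set.range (map (algebraMap (algebraicClosure ℚ ℂ) ℂ)) :=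
    mem_range_map_iff_coeffs_subset.mpr fun z hz => by
      obtain ⟨m, -, rfl⟩ := mem_coeffs_iff.mp hz
      exact ⟨⟨_, hf m⟩, rfl⟩
  have hPK (m : Fin 2 →₀ ℕ) : P.coeff m ∈ algebraicClosure ℚ ℂ :=
    mem_algebraicClosure_iff.mpr (halg m)
  have hQK := coeff_reciprocal_mem (s := algebraicClosure ℚ ℂ)
    (fun z hz => (map_mem_algebraicClosure_iff (starRingEnd ℂ).toRatAlgHom).mpr hz) hPK
  have hPQ : ¬P ∣ reciprocal P := by
    intro h
    obtain ⟨c, hc⟩ := exists_eq_C_mul_of_dvd hirr.ne_zero h (degreeOf_reciprocal_le P)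
    refine hnrec ⟨c, fun x y hx hy => ?_⟩
    have hv : (fun i => 1 / starRingEnd ℂ (![x, y] i)) =
        ![1 / starRingEnd ℂ x, 1 / starRingEnd ℂ y] := by
      ext i
      fin_cases i <;> rfl
    have := eval_reciprocal P (x := ![x, y]) (Fin.forall_fin_two.mpr ⟨hx, hy⟩)
    rw [hc, map_mul, eval_C, Fin.prod_univ_two, hv] at this
    exact this.symm
  have hQz := eval_reciprocal_eq_zero P (x := ![α, β]) (Fin.forall_fin_two.mpr ⟨hα, hβ⟩) hPz
  obtain ⟨hαK, hβK⟩ := isAlgebraic_of_eval_eq_zero (hK P hPK) (hK _ hQK) hirr hdx.ne' hdy.ne'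
    hPQ hPz hQz
  exact ⟨of_not_not fun h => Transcendental.algebraicClosure h hαK,
    of_not_not fun h => Transcendental.algebraicClosure h hβK⟩
end
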